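/- arXiv:2304.04946 — 3 statements merged into one kernel-verified Lean document; each statement's English description precedes it below -/
import Mathlib

section
/- For all positive reals b, c, d, β with d²β² > 4b and d > c, setting Δ = d²β² − 4b, every complex root of the characteristic polynomial of the 2×2 real matrix J₂ = [[c, −c/β],[dβ + √Δ, −d]] has strictly negative real part; if instead d < c, every complex root has strictly positive real part. -/
lemma quad_root_re (T D : ℝ) (hD : 0 < D) (z : ℂ)
    (hz : z ^ 2 - (T : ℂ) * z + (D : ℂ) = 0) :
    (T < 0 → z.re < 0) ∧ (0 < T → 0 < z.re) := by
  have hre : z.re ^ 2 - z.im ^ 2 - T * z.re + D = 0 := by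
    have := congrArg Complex.re hz
    simp [Complex.ext_iff, pow_two, Complex.mul_re] at this ⊢
    linarith [this]
  have him : z.im * (2 * z.re - T) = 0 := by
    have := congrArg Complex.im hz
    simp [Complex.ext_iff, pow_two, Complex.mul_im] at this
    linear_combination this
  rcases mul_eq_zero.mp him with hy | hx
  · constructor
    · intro hT
      by_contra hx0
      push_neg at hx0
      nlinarith
    · intro hT
      by_contra hx0
      push_neg at hx0
      nlinarith
  · have hx2 : z.re = T / 2 := by linarith
    constructor <;> intro hT <;> rw [hx2] <;> linarith

/-- If `d²β² > 4b` and `d > c`, every complex root of the characteristic polynomial of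
`J₂ = [[c, −c/β],[dβ + √Δ, −d]]` (with `Δ = d²β² − 4b`) has strictly negative real part;
if instead `d < c`, every complex root has strictly positive real part. -/
theorem stmt11 (b c d β : ℝ) (hb : 0 < b) (hc : 0 < c) (hd : 0 < d) (hβ : 0 < β)
    (h : d^2 * β^2 > 4 * b) :
    (d > c → ∀ z : ℂ,
      (Matrix.charpoly ((!![c, -(c / β); d * β + Real.sqrt (d^2 * β^2 - 4 * b), -d] :
          Matrix (Fin 2) (Fin 2) ℝ).map (Complex.ofReal))).IsRoot z → z.re < 0) ∧
    (d < c → ∀ z : ℂ,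
      (Matrix.charpoly ((!![c, -(c / β); d * β + Real.sqrt (d^2 * β^2 - 4 * b), -d] :
          Matrix (Fin 2) (Fin 2) ℝ).map (Complex.ofReal))).IsRoot z → 0 < z.re) := by
  set s := Real.sqrt (d^2 * β^2 - 4 * b) with hs
  have hΔ : 0 < d^2 * β^2 - 4 * b := by linarith
  have hspos : 0 < s := Real.sqrt_pos.mpr hΔ
  have hD : 0 < c * s / β := by positivity
  have key : ∀ z : ℂ,
      (Matrix.charpoly ((!![c, -(c / β); d * β + s, -d] :
          Matrix (Fin 2) (Fin 2) ℝ).map (Complex.ofReal))).IsRoot z →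
      (c - d < 0 → z.re < 0) ∧ (0 < c - d → 0 < z.re) := by
    intro z hz
    apply quad_root_re (c - d) (c * s / β) hD
    have hz' : (z - (c:ℂ)) * (z + (d:ℝ)) - (c:ℂ) / (β:ℝ) * (-(s:ℂ) + -((d:ℂ) * (β:ℂ))) = 0 := by
      have := hz
      simp only [Matrix.charpoly, Matrix.det_fin_two, Matrix.charmatrix_apply_eq,
        Matrix.charmatrix_apply_ne _ _ _ (by decide : (0:Fin 2) ≠ 1),
        Matrix.charmatrix_apply_ne _ _ _ (by decide : (1:Fin 2) ≠ 0),
        Polynomial.IsRoot, Polynomial.eval_sub, Polynomial.eval_mul, Polynomial.eval_X,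
        Polynomial.eval_C, Polynomial.eval_neg, Matrix.map_apply] at this
      simp [Matrix.cons_val_zero, Matrix.cons_val_one] at this
      linear_combination this
    have hβ' : (β : ℂ) ≠ 0 := by exact_mod_cast hβ.ne'
    push_cast at hz' ⊢
    field_simp at hz' ⊢
    ring_nf at hz' ⊢
    linear_combination hz'
  exact ⟨fun hdc z hz => (key z hz).1 (by linarith), fun hdc z hz => (key z hz).2 (by linarith)⟩
end

section
/- For all positive reals b, c, β with c²β² > 4b, setting Δ = c²β² − 4b, the complex eigenvalues of the 2×2 real matrix J₂ = [[c, −c/β],[cβ + √Δ, −c]] are the purely imaginary pair ±i·√(c√Δ/β); in particular they are nonzero and have zero real part. -/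
/-- If `c²β² > 4b` (with `b, c, β > 0`), setting `Δ = c²β² − 4b`, the complex eigenvalues of
`J₂ = [[c, −c/β],[cβ + √Δ, −c]]` are the purely imaginary pair `±i√(c√Δ/β)`; in particular
they are nonzero and have zero real part. -/
theorem stmt12 (b c β : ℝ) (hb : 0 < b) (hc : 0 < c) (hβ : 0 < β)
    (h : c^2 * β^2 > 4 * b) :
    (∀ z : ℂ,
      (Matrix.charpoly ((!![c, -(c / β); c * β + Real.sqrt (c^2 * β^2 - 4 * b), -c] :
          Matrix (Fin 2) (Fin 2) ℝ).map (Complex.ofReal))).IsRoot z ↔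
        (z = Complex.I * Real.sqrt (c * Real.sqrt (c^2 * β^2 - 4 * b) / β) ∨
         z = -(Complex.I * Real.sqrt (c * Real.sqrt (c^2 * β^2 - 4 * b) / β)))) ∧
    (∀ z : ℂ,
      (Matrix.charpoly ((!![c, -(c / β); c * β + Real.sqrt (c^2 * β^2 - 4 * b), -c] :
          Matrix (Fin 2) (Fin 2) ℝ).map (Complex.ofReal))).IsRoot z →
        z ≠ 0 ∧ z.re = 0) := by
  set Δ : ℝ := c^2 * β^2 - 4 * b with hΔ
  have hΔpos : 0 < Δ := by simp [hΔ]; linarith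
  have hsΔ : 0 < Real.sqrt Δ := Real.sqrt_pos.mpr hΔpos
  have hdpos : 0 < c * Real.sqrt Δ / β := by positivity
  set s : ℝ := Real.sqrt (c * Real.sqrt Δ / β) with hs
  have hspos : 0 < s := Real.sqrt_pos.mpr hdpos
  have hssq : s ^ 2 = c * Real.sqrt Δ / β := Real.sq_sqrt hdpos.le
  set M : Matrix (Fin 2) (Fin 2) ℂ :=
    (!![c, -(c / β); c * β + Real.sqrt Δ, -c] : Matrix (Fin 2) (Fin 2) ℝ).map Complex.ofReal
    with hM
  have hβ0 : (β : ℂ) ≠ 0 := by exact_mod_cast hβ.ne'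
  have htr : M.trace = 0 := by
    simp [hM, Matrix.trace_fin_two]
  have hdet : M.det = (s : ℂ) ^ 2 := by
    have : M.det = ((c : ℂ) * (-c) - (-(c / β)) * (c * β + Real.sqrt Δ)) := by
      simp [hM, Matrix.det_fin_two]
    rw [this]
    rw [show ((s : ℝ) : ℂ) ^ 2 = ((s ^ 2 : ℝ) : ℂ) by push_cast; ring, hssq]
    push_cast
    field_simp
    ring
  have hcp : M.charpoly = (Polynomial.X - Polynomial.C (M 0 0)) *
      (Polynomial.X - Polynomial.C (M 1 1)) -
      -Polynomial.C (M 0 1) * -Polynomial.C (M 1 0) := by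
    rw [Matrix.charpoly, Matrix.det_fin_two, Matrix.charmatrix_apply_eq,
      Matrix.charmatrix_apply_eq, Matrix.charmatrix_apply_ne _ _ _ (by decide),
      Matrix.charmatrix_apply_ne _ _ _ (by decide)]
  have hcp2 : ∀ z : ℂ, M.charpoly.eval z = z ^ 2 - M.trace * z + M.det := by
    intro z
    rw [hcp]
    simp [Matrix.trace_fin_two, Matrix.det_fin_two]
    ring
  have hroot : ∀ z : ℂ, M.charpoly.IsRoot z ↔ z ^ 2 + (s : ℂ) ^ 2 = 0 := by
    intro z
    rw [Polynomial.IsRoot.def, hcp2, htr, hdet]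
    constructor <;> intro hh <;> linear_combination hh
  have key : ∀ z : ℂ, z ^ 2 + (s : ℂ) ^ 2 = 0 ↔
      (z = Complex.I * s ∨ z = -(Complex.I * s)) := by
    intro z
    have hI : (Complex.I * s) ^ 2 = -(s : ℂ) ^ 2 := by
      rw [mul_pow, Complex.I_sq]; ring
    constructor
    · intro hz
      have : (z - Complex.I * s) * (z + Complex.I * s) = 0 := by
        rw [show (z - Complex.I * s) * (z + Complex.I * s)
            = z ^ 2 - (Complex.I * s) ^ 2 by ring, hI]
        linear_combination hz
      rcases mul_eq_zero.mp this with h1 | h1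
      · left; exact sub_eq_zero.mp h1
      · right; exact eq_neg_of_add_eq_zero_left h1
    · rintro (rfl | rfl)
      · rw [hI]; ring
      · rw [neg_sq, hI]; ring
  constructor
  · intro z
    rw [hroot z]; exact key z
  · intro z hz
    rw [hroot z, key z] at hz
    have hs0 : ((s : ℝ) : ℂ) ≠ 0 := by exact_mod_cast hspos.ne'
    rcases hz with rfl | rfl
    · refine ⟨by simp [Complex.ext_iff, hspos.ne'], by simp⟩
    · refine ⟨by simp [Complex.ext_iff, hspos.ne'], by simp⟩
end

section
/- For all positive reals c, d, β, with W = (1, −c/(dβ)): (i) the dot product of W with the vector ∂F/∂b evaluated at E₁ = (dβ/2, dβ²/2), which equals (0, 1), is −c/(dβ) ≠ 0; and (ii) writing V = (1, β), the second derivative at t = 0 of the curve t ↦ F((dβ/2 + t, dβ²/2 + tβ)) with parameter b = d²β²/4 equals (0, 2), so the dot product of W with this vector is −2c/(dβ) ≠ 0. -/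
/-! On the line through `E₁` in the direction `V = (1, β)` one has `v = β u`, so the kinetic term
`β u² / v - u` vanishes identically and `b + u² - d v` reduces to `t²` at `b = d²β²/4`: the curve
`t ↦ F(E₁ + t V)` is exactly `t ↦ (0, t²)` (for every `t`, since `0 / 0 = 0` covers `u = 0`). Both transversality quantities are then explicit
nonzero multiples of `c / (dβ)`. -/

theorem mul_sq_div_mul_self {K : Type*} [Field K] {β : K} (hβ : β ≠ 0) (x : K) :
    β * x ^ 2 / (β * x) = x := by
  rw [mul_div_mul_left _ _ hβ, sq, mul_self_div_self]

theorem deriv_const_prodMk {𝕜 E F : Type*} [NontriviallyNormedField 𝕜] [NormedAddCommGroup E]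
    [NormedSpace 𝕜 E] [NormedAddCommGroup F] [NormedSpace 𝕜 F] (e : E) {f : 𝕜 → F}
    (hf : Differentiable 𝕜 f) : deriv (fun t => (e, f t)) = fun t => (0, deriv f t) :=
  funext fun t => ((hasDerivAt_const t e).prodMk (hf t).hasDerivAt).deriv

theorem deriv_deriv_zero_prodMk_sq : deriv (deriv fun t : ℝ => ((0 : ℝ), t ^ 2)) 0 = (0, 2) := by
  have hsq : deriv (fun t : ℝ => t ^ 2) = fun t => 2 * t := by funext t; simp
  rw [deriv_const_prodMk _ (differentiable_pow 2), hsq, deriv_const_prodMk _ (by fun_prop)]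
  simp

theorem gierer_meinhardt_along_null_vector (c d : ℝ) {β : ℝ} (hβ : β ≠ 0) :
    (fun t : ℝ =>
      ((c * (β * (d * β / 2 + t)^2 / (d * β^2 / 2 + t * β) - (d * β / 2 + t)),
        d^2 * β^2 / 4 + (d * β / 2 + t)^2 - d * (d * β^2 / 2 + t * β)) : ℝ × ℝ)) =
      fun t => (0, t ^ 2) := by
  funext t
  have hv : d * β ^ 2 / 2 + t * β = β * (d * β / 2 + t) := by ring
  rw [hv, mul_sq_div_mul_self hβ]
  ext
  · simp only [sub_self, mul_zero]
  · ring

/-- Sotomayor transversality conditions at `E₁ = (dβ/2, dβ²/2)` with `b = d²β²/4`: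
(i) the derivative of `F` with respect to the parameter `b` at `E₁` equals `(0,1)`, and its
dot product with `W = (1, −c/(dβ))` is `−c/(dβ) ≠ 0`; (ii) the second derivative at `t = 0`
of `t ↦ F(dβ/2 + t, dβ²/2 + tβ)` (direction `V = (1, β)`) equals `(0,2)`, and its dot
product with `W` is `−2c/(dβ) ≠ 0`. -/
theorem stmt14 (c d β : ℝ) (hc : 0 < c) (hd : 0 < d) (hβ : 0 < β) :
    HasDerivAt
      (fun b' : ℝ =>
        ((c * (β * (d * β / 2)^2 / (d * β^2 / 2) - d * β / 2),
          b' + (d * β / 2)^2 - d * (d * β^2 / 2)) : ℝ × ℝ))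
      ((0 : ℝ), (1 : ℝ)) (d^2 * β^2 / 4) ∧
    (1 : ℝ) * 0 + (-(c / (d * β))) * 1 = -(c / (d * β)) ∧
    -(c / (d * β)) ≠ 0 ∧
    deriv (deriv
      (fun t : ℝ =>
        ((c * (β * (d * β / 2 + t)^2 / (d * β^2 / 2 + t * β) - (d * β / 2 + t)),
          d^2 * β^2 / 4 + (d * β / 2 + t)^2 - d * (d * β^2 / 2 + t * β)) : ℝ × ℝ))) 0 =
      ((0 : ℝ), (2 : ℝ)) ∧
    (1 : ℝ) * 0 + (-(c / (d * β))) * 2 = -(2 * c / (d * β)) ∧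
    -(2 * c / (d * β)) ≠ 0 := by
  have hF_b := (hasDerivAt_const (d ^ 2 * β ^ 2 / 4)
    (c * (β * (d * β / 2) ^ 2 / (d * β ^ 2 / 2) - d * β / 2))).prodMk
    (((hasDerivAt_id _).add_const ((d * β / 2) ^ 2)).sub_const (d * (d * β ^ 2 / 2)))
  refine ⟨hF_b, by ring, neg_ne_zero.mpr (by positivity), ?_, by ring,
    neg_ne_zero.mpr (by positivity)⟩
  rw [gierer_meinhardt_along_null_vector c d hβ.ne', deriv_deriv_zero_prodMk_sq]
end
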